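/- arXiv:2208.07102 — 5 statements merged into one kernel-verified Lean document; each statement's English description precedes it below -/
import Mathlib

section
/- Let E be a group, let z ∈ E be a central element of infinite order, let Z = ⟨z⟩, let π : E → G := E/Z be the quotient homomorphism, let s : G → E be a set-theoretic section of π, and let ω : G × G → ℤ be the function determined by s(g)·s(h) = z^{ω(g,h)}·s(gh) for all g, h ∈ G. If there exists a subgroup H ≤ E with H ∩ Z = {1} such that the subgroup H·Z has finite index in E, then there exists a function f : G → ℚ such that ω(g,h) = f(g) + f(h) − f(gh) in ℚ for all g, h ∈ G. -/
/-!
The subgroup `H ⊔ ⟨z⟩` is the internal direct product `H × ⟨z⟩ ≅ H × ℤ`, so the projection to the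
second factor is a homomorphism `H ⊔ ⟨z⟩ → ℤ` sending `z` to `1`. Since the transfer of a central
element is its `n`-th power, `n` the index of `H ⊔ ⟨z⟩`, the transfer of this projection divided
by `n` is a homomorphism `F : E → ℚ` with `F z = 1`. Applying `F` to
`s g * s h = z ^ ω g h * s (g * h)` exhibits `ω` as the coboundary of `F ∘ s`.
-/

open Subgroup

theorem Subgroup.exists_sup_zpowers_hom_eq_ofAdd_one {G : Type*} [Group G] (H : Subgroup G)
    {z : G} (hz : z ∈ center G) (hord : ¬IsOfFinOrder z) (hdisj : H ⊓ zpowers z = ⊥) :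
    ∃ φ : ↥(H ⊔ zpowers z) →* Multiplicative ℤ,
      φ ⟨z, mem_sup_right (mem_zpowers z)⟩ = Multiplicative.ofAdd 1 := by
  have hcomm (h : H) (k : Multiplicative ℤ) : Commute (H.subtype h) (zpowersHom G z k) :=
    mem_center_iff.mp ((center G).zpow_mem hz _) h
  let f : H × Multiplicative ℤ →* G := H.subtype.noncommCoprod (zpowersHom G z) hcomm
  have hf : Function.Injective f := by
    refine (MonoidHom.noncommCoprod_injective _ _ _).mpr
      ⟨H.subtype_injective, injective_zpow_iff_not_isOfFinOrder.mpr hord, ?_⟩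
    rw [range_subtype, range_zpowersHom, disjoint_iff, hdisj]
  have hrange : f.range = H ⊔ zpowers z := by
    have := MonoidHom.noncommCoprod_range H.subtype (zpowersHom G z) hcomm
    rwa [range_subtype, range_zpowersHom] at this
  refine ⟨(MonoidHom.snd _ _).comp ((MonoidHom.ofInjective hf).symm.toMonoidHom.comp
    (MulEquiv.subgroupCongr hrange.symm).toMonoidHom), ?_⟩
  have hz_preimage : (MonoidHom.ofInjective hf).symm ⟨z, hrange ▸ mem_sup_right (mem_zpowers z)⟩ =
      (1, Multiplicative.ofAdd 1) := by
    rw [MulEquiv.symm_apply_eq, Subtype.ext_iff, MonoidHom.ofInjective_apply]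
    show z = (1 : H) * z ^ (1 : ℤ)
    simp
  exact congrArg Prod.snd hz_preimage

theorem Subgroup.exists_hom_eq_on_center_of_finiteIndex {G V : Type*} [Group G]
    [AddCommGroup V] [Module ℚ V] (K : Subgroup G) [K.FiniteIndex]
    (φ : K →* Multiplicative V) :
    ∃ ψ : G →* Multiplicative V, ∀ g, g ∈ center G → ∀ hgK : g ∈ K, ψ g = φ ⟨g, hgK⟩ := by
  refine ⟨(DistribSMul.toAddMonoidHom V (K.index⁻¹ : ℚ)).toMultiplicative.comp
    (φ.transfer), fun g hg hgK => ?_⟩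
  have hindex : (K.index : ℚ) ≠ 0 := Nat.cast_ne_zero.mpr FiniteIndex.index_ne_zero
  rw [MonoidHom.comp_apply, MonoidHom.transfer_eq_pow φ g fun k g₀ _ => by
      rw [mul_assoc, ← (mem_center_iff.mp (pow_mem hg k)) g₀, inv_mul_cancel_left]]
  have hpow : (⟨g ^ K.index, _⟩ : K) = ⟨g, hgK⟩ ^ K.index := rfl
  rw [hpow, map_pow]
  apply Multiplicative.toAdd.injective
  simp [AddMonoidHom.toMultiplicative, ← Nat.cast_smul_eq_nsmul ℚ, smul_smul, hindex]

/-- If the central extension `1 → ⟨z⟩ → E → G := E/⟨z⟩ → 1` (with `z` central of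
infinite order) virtually splits, then the associated integral 2-cocycle `ω` (determined by a
set-theoretic section `s` via `s g * s h = z ^ ω g h * s (g * h)`) becomes a coboundary with
rational coefficients. -/
theorem virtually_split_central_extension_rational_coboundary
    {E : Type*} [Group E] (z : E) (hz : z ∈ Subgroup.center E)
    (hord : ¬ IsOfFinOrder z) :
    haveI : (Subgroup.zpowers z).Normal :=
      ⟨fun n hn g => by
        obtain ⟨k, rfl⟩ := Subgroup.mem_zpowers_iff.mp hn
        exact Subgroup.mem_zpowers_iff.mpr
          ⟨k, by rw [Subgroup.mem_center_iff.mp (Subgroup.zpow_mem _ hz k) g,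
            mul_inv_cancel_right]⟩⟩
    ∀ (s : E ⧸ Subgroup.zpowers z → E),
      (∀ g : E ⧸ Subgroup.zpowers z, QuotientGroup.mk (s g) = g) →
      ∀ (ω : E ⧸ Subgroup.zpowers z → E ⧸ Subgroup.zpowers z → ℤ),
        (∀ g h, s g * s h = z ^ ω g h * s (g * h)) →
        (∃ H : Subgroup E, H ⊓ Subgroup.zpowers z = ⊥ ∧
            (H ⊔ Subgroup.zpowers z).FiniteIndex) →
        ∃ f : E ⧸ Subgroup.zpowers z → ℚ,
          ∀ g h, (ω g h : ℚ) = f g + f h - f (g * h) := by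
  intro s _ ω hω ⟨H, hdisj, hfin⟩
  obtain ⟨φ, hφz⟩ := H.exists_sup_zpowers_hom_eq_ofAdd_one hz hord hdisj
  obtain ⟨ψ, hψ⟩ := (H ⊔ zpowers z).exists_hom_eq_on_center_of_finiteIndex
    ((Int.castAddHom ℚ).toMultiplicative.comp φ)
  have hψz (n : ℤ) : (ψ (z ^ n)).toAdd = n := by
    rw [map_zpow, hψ z hz (mem_sup_right (mem_zpowers z)), MonoidHom.comp_apply, hφz]
    simp [AddMonoidHom.toMultiplicative]
  refine ⟨fun g => (ψ (s g)).toAdd, fun g h => ?_⟩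
  have hFω := congrArg (fun e => (ψ e).toAdd) (hω g h)
  simp only [map_mul, toAdd_mul, hψz] at hFω
  linarith
end

section
/- Let G and H be groups and let A be a central subgroup of G. If the subgroup A × {1} of G × H is a direct factor of a finite-index subgroup of G × H, then A is a direct factor of a finite-index subgroup of G. -/
namespace Stmt5

open Pointwise

/-- `A` is a direct factor of a finite-index subgroup of `G`: there are a finite-index
subgroup `K ≤ G` containing `A` and a subgroup `B ≤ K` such that `A` and `B` are normal
in `K`, `A ∩ B = {1}` and `A·B = K`. -/
def IsDirectFactorOfFiniteIndexSubgroup {G : Type*} [Group G] (A : Subgroup G) : Prop :=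
  ∃ K B : Subgroup G, K.FiniteIndex ∧ A ≤ K ∧ B ≤ K ∧
    (∀ k ∈ K, ∀ a ∈ A, k * a * k⁻¹ ∈ A) ∧
    (∀ k ∈ K, ∀ b ∈ B, k * b * k⁻¹ ∈ B) ∧
    A ⊓ B = ⊥ ∧ (A : Set G) * (B : Set G) = (K : Set G)

/-- If `A` is a central subgroup of `G` and `A × {1}` is a direct factor of a
finite-index subgroup of `G × H`, then `A` is a direct factor of a finite-index subgroup
of `G`. -/
theorem direct_factor_of_prod_direct_factor
    {G H : Type*} [Group G] [Group H]
    (A : Subgroup G) (hA : A ≤ Subgroup.center G)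
    (h : IsDirectFactorOfFiniteIndexSubgroup (A.prod (⊥ : Subgroup H))) :
    IsDirectFactorOfFiniteIndexSubgroup A := by
  obtain ⟨K, B, hK, hAK, hBK, hAn, hBn, hABdisj, hABmul⟩ := h
  refine ⟨K.comap (MonoidHom.inl G H), B.comap (MonoidHom.inl G H), ?_, ?_, ?_, ?_, ?_, ?_, ?_⟩
  · refine ⟨?_⟩
    rw [Subgroup.index_comap]
    exact (Subgroup.instFiniteIndex_subgroupOf K _).index_ne_zero
  · intro a ha
    exact hAK (show ((a : G), (1 : H)) ∈ A.prod ⊥ from ⟨ha, Subgroup.mem_bot.2 rfl⟩)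
  · intro b hb
    exact hBK hb
  · intro k hk a ha
    have h1 := hAn ((k : G), (1 : H)) hk ((a : G), (1 : H)) ⟨ha, Subgroup.mem_bot.2 rfl⟩
    have h2 : ((k, 1) * (a, 1) * (k, 1)⁻¹ : G × H) = (k * a * k⁻¹, 1) := by
      simp [Prod.ext_iff]
    rw [h2] at h1
    exact h1.1
  · intro k hk b hb
    have h1 := hBn ((k : G), (1 : H)) hk ((b : G), (1 : H)) hb
    have h2 : ((k, 1) * (b, 1) * (k, 1)⁻¹ : G × H) = (k * b * k⁻¹, 1) := by
      simp [Prod.ext_iff]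
    rw [Subgroup.mem_comap]
    simpa [h2] using h1
  · ext a
    simp only [Subgroup.mem_inf, Subgroup.mem_comap, Subgroup.mem_bot]
    constructor
    · rintro ⟨ha, hb⟩
      have : ((a : G), (1 : H)) ∈ A.prod (⊥ : Subgroup H) ⊓ B :=
        ⟨⟨ha, Subgroup.mem_bot.2 rfl⟩, hb⟩
      rw [hABdisj, Subgroup.mem_bot, Prod.ext_iff] at this
      exact this.1
    · rintro rfl
      exact ⟨A.one_mem, (B.comap (MonoidHom.inl G H)).one_mem⟩
  · ext g
    constructor
    · rintro ⟨a, ha, b, hb, rfl⟩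
      have : ((a * b : G), (1 : H)) ∈ K := by
        have : ((a * b : G), (1 : H)) = ((a : G), (1 : H)) * ((b : G), (1 : H)) := by
          simp
        rw [this]
        exact K.mul_mem (hAK ⟨ha, Subgroup.mem_bot.2 rfl⟩) (hBK hb)
      exact this
    · intro hg
      have hg' : ((g : G), (1 : H)) ∈ ((A.prod (⊥ : Subgroup H) : Set (G × H)) *
          (B : Set (G × H))) := by
        rw [hABmul]; exact hg
      obtain ⟨x, hx, y, hy, hxy⟩ := hg'
      obtain ⟨hx1, hx2⟩ := hx
      replace hx2 : x.2 = 1 := by simpa using hx2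
      have hy1 : y = (x.1⁻¹ * g, 1) := by
        have := hxy
        rw [Prod.ext_iff] at this
        obtain ⟨e1, e2⟩ := this
        apply Prod.ext
        · simp only [Prod.fst_mul] at e1
          field_simp
          rw [← e1]
          simp [one_div, inv_mul_cancel_left]
        · simp only [Prod.snd_mul, hx2, one_mul] at e2
          simp [e2]
      refine ⟨x.1, hx1, x.1⁻¹ * g, ?_, by group⟩
      show ((x.1⁻¹ * g : G), (1 : H)) ∈ B
      rw [← hy1]; exact hy
  done

end Stmt5
end

section
/- For a subset I ⊆ {1, 2, 3, ...} let G_I be the group presented by generators a, t, z and relations a² = 1, z² = 1, [z,a] = 1, [z,t] = 1, together with, for each integer n ≥ 1: the relation [tⁿ a t⁻ⁿ, a] = 1 if n ∈ I, and the relation [tⁿ a t⁻ⁿ, a] = z if n ∉ I. Then for all subsets I, J ⊆ {1, 2, 3, ...}, the groups G_I and G_J are isomorphic if and only if I = J. -/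
/-!
`G_J` has a concrete model: on `𝔽₂[T, T⁻¹] × ℤ × ℤ/2` (lamp configuration, position of the
lamplighter, central coordinate) put the multiplication of the central extension of
`ℤ/2 ≀ ℤ = 𝔽₂[T, T⁻¹] ⋊ ℤ` by the bilinear 2-cocycle `β_J(f, g) = ∑_{i > j} fᵢ gⱼ ε_J(i - j)`,
where `ε_J(d) = 1` iff `|d| ∉ J`. Two lamps at distance `n` then commute up to `z ^ ε_J(n)`, so
sending `a`, `t`, `z` to the lamp at `0`, the unit shift and the central generator respects the
relations of `G_J`.

Given `ψ : G_I ≃* G_J`, let `ρ` be `ψ` followed by this model map. The image of `z` is central,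
hence `1` or `z`. Modulo the normal subgroup of lamp configurations in the ideal generated by the
lamps of `ρ(a)`, the image of `ρ` consists of powers of `ρ(t)`; since it contains the lamp at `0`
and the unit shift, `ρ(t)` moves by `±1` and the lamps of `ρ(a)` form a unit of `𝔽₂[T, T⁻¹]`,
i.e. a single lamp. Evaluating the relations of `G_I` in the model then gives `I = J` if
`ρ(z) = z`, and `J = ℕ+` if `ρ(z) = 1`. Doing the same for `ψ⁻¹` leaves `I = J` in every case.
-/

namespace Stmt6

open scoped commutatorElement

/-- The generator `a` of the free group on three letters. -/
def a : FreeGroup (Fin 3) := FreeGroup.of 0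

/-- The generator `t` of the free group on three letters. -/
def t : FreeGroup (Fin 3) := FreeGroup.of 1

/-- The generator `z` of the free group on three letters. -/
def z : FreeGroup (Fin 3) := FreeGroup.of 2

/-- The relators of `G_I`, for `I ⊆ {1, 2, 3, ...}`: `a² = z² = [z,a] = [z,t] = 1`, and
for each `n ≥ 1` the relator `[tⁿat⁻ⁿ, a]` if `n ∈ I`, and `[tⁿat⁻ⁿ, a]·z⁻¹`
(i.e. the relation `[tⁿat⁻ⁿ, a] = z`) if `n ∉ I`. -/
def rels (I : Set ℕ+) : Set (FreeGroup (Fin 3)) :=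
  {a ^ 2, z ^ 2, ⁅z, a⁆, ⁅z, t⁆}
    ∪ (fun n : ℕ+ => ⁅t ^ (n : ℕ) * a * (t ^ (n : ℕ))⁻¹, a⁆) '' I
    ∪ (fun n : ℕ+ => ⁅t ^ (n : ℕ) * a * (t ^ (n : ℕ))⁻¹, a⁆ * z⁻¹) '' Iᶜ

/-- The group `G_I`, a central extension of the lamplighter group `ℤ/2 ≀ ℤ` twisted
according to the subset `I ⊆ {1, 2, 3, ...}`. -/
def G (I : Set ℕ+) := PresentedGroup (rels I)

instance (I : Set ℕ+) : Group (G I) := inferInstanceAs (Group (PresentedGroup (rels I)))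

end Stmt6

namespace LaurentPolynomial

theorem T_injective {R : Type*} [Semiring R] [Nontrivial R] :
    Function.Injective (T : ℤ → R[T;T⁻¹]) := fun _ _ h =>
  (AddMonoidAlgebra.single_left_inj one_ne_zero).mp h

theorem eq_zero_of_T_mul_eq_self {R : Type*} [CommRing R] [IsDomain R] {n : ℤ} (hn : n ≠ 0)
    {f : R[T;T⁻¹]} (h : T n * f = f) : f = 0 := by
  have : (T n - 1) * f = 0 := by rw [sub_mul, h, one_mul, sub_self]
  refine (mul_eq_zero.mp this).resolve_left ?_
  exact sub_ne_zero.mpr (T_zero (R := R) ▸ T_injective.ne hn)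

theorem exists_C_mul_T_of_isUnit {R : Type*} [CommRing R] [IsDomain R] {f : R[T;T⁻¹]}
    (hf : IsUnit f) : ∃ (r : R) (n : ℤ), IsUnit r ∧ f = C r * T n := by
  obtain ⟨g, hfg⟩ := isUnit_iff_exists_inv.mp hf
  obtain ⟨m, f', hf'⟩ := exists_T_pow f
  obtain ⟨n, g', hg'⟩ := exists_T_pow g
  have hX : f' * g' = Polynomial.X ^ (m + n) := by
    apply Polynomial.toLaurent_injective
    rw [map_mul, hf', hg', Polynomial.toLaurent_X_pow, Nat.cast_add, T_add,
      mul_mul_mul_comm, hfg, one_mul]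
  obtain ⟨i, -, hi⟩ := (dvd_prime_pow Polynomial.prime_X _).mp ⟨g', hX.symm⟩
  obtain ⟨u, hu⟩ := hi.symm
  obtain ⟨r, hr, hCr⟩ := Polynomial.isUnit_iff.mp u.isUnit
  refine ⟨r, i - m, hr, ?_⟩
  have : f = Polynomial.toLaurent f' * T (-m) := by
    rw [hf', mul_assoc, ← T_add, add_neg_cancel, T_zero, mul_one]
  rw [this, ← hu, ← hCr, map_mul, Polynomial.toLaurent_C, Polynomial.toLaurent_X_pow, T_sub]
  ring

end LaurentPolynomial

namespace Stmt6

open scoped commutatorElement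

open LaurentPolynomial

namespace G

variable {I : Set ℕ+}

def mk (I : Set ℕ+) : FreeGroup (Fin 3) →* G I := PresentedGroup.mk (rels I)

theorem mk_eq_one_of_mem_rels {r : FreeGroup (Fin 3)} (hr : r ∈ rels I) : mk I r = 1 :=
  (QuotientGroup.eq_one_iff r).mpr (Subgroup.subset_normalClosure hr)

theorem closure_mk : Subgroup.closure {mk I a, mk I t, mk I z} = ⊤ := by
  refine eq_top_iff.mpr ((PresentedGroup.closure_range_of (rels I)).ge.trans
    (Subgroup.closure_mono ?_))
  rintro _ ⟨i, rfl⟩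
  fin_cases i
  exacts [Or.inl rfl, Or.inr (Or.inl rfl), Or.inr (Or.inr rfl)]

theorem range_le {H : Type*} [Group H] (φ : G I →* H) {K : Subgroup H} (ha : φ (mk I a) ∈ K)
    (ht : φ (mk I t) ∈ K) (hz : φ (mk I z) ∈ K) : φ.range ≤ K := by
  rw [MonoidHom.range_eq_map, ← closure_mk, MonoidHom.map_closure, Subgroup.closure_le]
  simp [Set.insert_subset_iff, ha, ht, hz]

theorem mk_a_mul_self : mk I a * mk I a = 1 := by
  rw [← map_mul, ← sq]
  exact mk_eq_one_of_mem_rels (by simp [rels])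

theorem commute_mk_z (x : G I) : Commute (mk I z) x := by
  have hmem : ∀ y, ⁅z, y⁆ ∈ rels I → mk I y ∈ Subgroup.centralizer {mk I z} := fun y hy =>
    Subgroup.mem_centralizer_singleton_iff.mpr (commutatorElement_eq_one_iff_mul_comm.mp
      (map_commutatorElement (mk I) z y ▸ mk_eq_one_of_mem_rels hy)).symm
  have hle := range_le (MonoidHom.id (G I)) (hmem a (by simp [rels])) (hmem t (by simp [rels]))
    (Subgroup.mem_centralizer_singleton_iff.mpr rfl)
  exact (Subgroup.mem_centralizer_singleton_iff.mp (hle ⟨x, rfl⟩)).symm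

open Classical in
theorem mk_commutatorElement (n : ℕ+) :
    ⁅mk I t ^ (n : ℕ) * mk I a * (mk I t ^ (n : ℕ))⁻¹, mk I a⁆ = if n ∈ I then 1 else mk I z := by
  simp only [← map_pow, ← map_mul, ← map_inv, ← map_commutatorElement]
  split_ifs with hn
  · exact mk_eq_one_of_mem_rels (Or.inl (Or.inr ⟨n, hn, rfl⟩))
  · exact mul_inv_eq_one.mp (mk_eq_one_of_mem_rels (Or.inr ⟨n, hn, rfl⟩))

end G

abbrev Lamps := (ZMod 2)[T;T⁻¹]

instance : CharP Lamps 2 := charP_of_injective_algebraMap' (ZMod 2) 2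

open Classical in
noncomputable def eps (J : Set ℕ+) (d : ℤ) : ZMod 2 := if ∃ n ∉ J, (n : ℤ) = |d| then 1 else 0

theorem eps_of_abs_eq {J : Set ℕ+} {d d' : ℤ} (h : |d| = |d'|) : eps J d = eps J d' := by
  unfold eps
  rw [h]

theorem eps_zero (J : Set ℕ+) : eps J 0 = 0 :=
  if_neg fun ⟨n, _, hn⟩ => n.ne_zero (by simp at hn)

open Classical in
theorem eps_coe (J : Set ℕ+) (n : ℕ+) : eps J n = if n ∈ J then 0 else 1 := by
  simp only [eps, abs_of_pos (Int.natCast_pos.mpr n.pos), Nat.cast_inj, PNat.coe_inj,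
    exists_eq_right, ite_not]

noncomputable def cocycle (J : Set ℕ+) : Lamps →ₗ[ZMod 2] Lamps →ₗ[ZMod 2] ZMod 2 :=
  (AddMonoidAlgebra.basis ℤ (ZMod 2)).constr (ZMod 2) fun i =>
    (AddMonoidAlgebra.basis ℤ (ZMod 2)).constr (ZMod 2) fun j => if j < i then eps J (i - j) else 0

theorem cocycle_T_T (J : Set ℕ+) (i j : ℤ) :
    cocycle J (T i) (T j) = if j < i then eps J (i - j) else 0 := by
  have hT : ∀ n, (T n : Lamps) = AddMonoidAlgebra.basis ℤ (ZMod 2) n := fun _ => rfl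
  rw [hT, hT, cocycle, Module.Basis.constr_basis, Module.Basis.constr_basis]

theorem cocycle_T_T_add_cocycle_T_T (J : Set ℕ+) (i j : ℤ) :
    cocycle J (T i) (T j) + cocycle J (T j) (T i) = eps J (i - j) := by
  rw [cocycle_T_T, cocycle_T_T]
  rcases lt_trichotomy i j with h | rfl | h
  · rw [if_neg h.not_gt, if_pos h, zero_add, eps_of_abs_eq (abs_sub_comm _ _)]
  · simp [eps_zero]
  · rw [if_pos h, if_neg h.not_gt, add_zero]

theorem cocycle_T_mul_T_mul (J : Set ℕ+) (m : ℤ) (f g : Lamps) :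
    cocycle J (T m * f) (T m * g) = cocycle J f g := by
  let b := AddMonoidAlgebra.basis ℤ (ZMod 2)
  have hT : ∀ n, (T n : Lamps) = b n := fun _ => rfl
  suffices (cocycle J).compl₁₂ (LinearMap.mulLeft (ZMod 2) (T m)) (LinearMap.mulLeft _ (T m))
      = cocycle J from LinearMap.congr_fun₂ this f g
  refine LinearMap.ext_basis b b fun i j => ?_
  simp only [LinearMap.compl₁₂_apply, LinearMap.mulLeft_apply, ← hT, ← T_add, cocycle_T_T,
    add_lt_add_iff_left, add_sub_add_left_eq_sub]

@[ext]
structure Model (J : Set ℕ+) where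
  lamps : Lamps
  shift : ℤ
  central : ZMod 2

namespace Model

variable {J : Set ℕ+}

noncomputable instance : Group (Model J) where
  mul x y := ⟨x.lamps + T x.shift * y.lamps, x.shift + y.shift,
    x.central + y.central + cocycle J x.lamps (T x.shift * y.lamps)⟩
  one := ⟨0, 0, 0⟩
  inv x := ⟨T (-x.shift) * x.lamps, -x.shift,
    x.central + cocycle J (T (-x.shift) * x.lamps) (T (-x.shift) * x.lamps)⟩
  mul_assoc x y w := by
    refine Model.ext ?_ (add_assoc _ _ _) ?_
    · change x.lamps + T x.shift * y.lamps + T (x.shift + y.shift) * w.lamps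
        = x.lamps + T x.shift * (y.lamps + T y.shift * w.lamps)
      rw [T_add]; ring
    · change x.central + y.central + cocycle J x.lamps (T x.shift * y.lamps) + w.central
          + cocycle J (x.lamps + T x.shift * y.lamps) (T (x.shift + y.shift) * w.lamps)
        = x.central + (y.central + w.central + cocycle J y.lamps (T y.shift * w.lamps))
          + cocycle J x.lamps (T x.shift * (y.lamps + T y.shift * w.lamps))
      rw [map_add, LinearMap.add_apply, T_add, mul_assoc, cocycle_T_mul_T_mul, mul_add, map_add]
      ring
  one_mul x := by
    refine Model.ext ?_ (zero_add _) ?_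
    · change 0 + T 0 * x.lamps = x.lamps
      rw [T_zero, one_mul, zero_add]
    · change 0 + x.central + cocycle J 0 (T 0 * x.lamps) = x.central
      rw [map_zero, LinearMap.zero_apply, zero_add, add_zero]
  mul_one x := by
    refine Model.ext ?_ (add_zero _) ?_
    · change x.lamps + T x.shift * 0 = x.lamps
      rw [mul_zero, add_zero]
    · change x.central + 0 + cocycle J x.lamps (T x.shift * 0) = x.central
      rw [mul_zero, map_zero, add_zero, add_zero]
  inv_mul_cancel x := by
    refine Model.ext (CharTwo.add_self_eq_zero _) (neg_add_cancel _) ?_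
    change x.central + cocycle J (T (-x.shift) * x.lamps) (T (-x.shift) * x.lamps) + x.central
      + cocycle J (T (-x.shift) * x.lamps) (T (-x.shift) * x.lamps) = 0
    rw [add_right_comm _ _ x.central, CharTwo.add_self_eq_zero, zero_add, CharTwo.add_self_eq_zero]

@[simp] theorem mul_lamps (x y : Model J) : (x * y).lamps = x.lamps + T x.shift * y.lamps := rfl
@[simp] theorem mul_shift (x y : Model J) : (x * y).shift = x.shift + y.shift := rfl
@[simp] theorem mul_central (x y : Model J) :
    (x * y).central = x.central + y.central + cocycle J x.lamps (T x.shift * y.lamps) := rfl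
@[simp] theorem one_lamps : (1 : Model J).lamps = 0 := rfl
@[simp] theorem one_shift : (1 : Model J).shift = 0 := rfl
@[simp] theorem one_central : (1 : Model J).central = 0 := rfl
@[simp] theorem inv_lamps (x : Model J) : x⁻¹.lamps = T (-x.shift) * x.lamps := rfl
@[simp] theorem inv_shift (x : Model J) : x⁻¹.shift = -x.shift := rfl
@[simp] theorem inv_central (x : Model J) :
    x⁻¹.central = x.central + cocycle J (T (-x.shift) * x.lamps) (T (-x.shift) * x.lamps) := rfl

noncomputable def shiftHom : Model J →* Multiplicative ℤ where
  toFun x := .ofAdd x.shift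
  map_one' := rfl
  map_mul' _ _ := rfl

theorem zpow_shift (x : Model J) (k : ℤ) : (x ^ k).shift = k * x.shift :=
  congrArg Multiplicative.toAdd (map_zpow shiftHom x k)

theorem pow_shift (x : Model J) (n : ℕ) : (x ^ n).shift = n * x.shift := by
  rw [← zpow_natCast, zpow_shift]

theorem conj_lamps {σ x : Model J} (hx : x.shift = 0) :
    (σ * x * σ⁻¹).lamps = T σ.shift * x.lamps := by
  simp only [mul_lamps, inv_lamps, mul_shift, hx, add_zero, ← mul_assoc, ← T_add, add_neg_cancel,
    T_zero, one_mul]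
  rw [add_right_comm, CharTwo.add_self_eq_zero, zero_add]

theorem conj_shift {σ x : Model J} (hx : x.shift = 0) : (σ * x * σ⁻¹).shift = 0 := by
  simp [hx]

theorem commutatorElement_of_shift_eq_zero {x y : Model J} (hx : x.shift = 0) (hy : y.shift = 0) :
    ⁅x, y⁆ = ⟨0, 0, cocycle J x.lamps y.lamps + cocycle J y.lamps x.lamps⟩ := by
  obtain ⟨f, m, u⟩ := x
  obtain ⟨g, n, v⟩ := y
  subst hx hy
  refine Model.ext ?_ rfl ?_
  · change f + T 0 * g + T 0 * (T (-0) * f) + T 0 * (T (-0) * g) = 0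
    simp only [neg_zero, T_zero, one_mul]
    calc f + g + f + g = (f + g) + (f + g) := by abel
      _ = 0 := CharTwo.add_self_eq_zero _
  · simp only [commutatorElement_def, mul_central, mul_lamps, inv_lamps, inv_central, mul_shift,
      inv_shift, neg_zero, T_zero, one_mul, add_zero, map_add, LinearMap.add_apply]
    ring_nf
    reduce_mod_char

noncomputable def a : Model J := ⟨1, 0, 0⟩
noncomputable def t : Model J := ⟨0, 1, 0⟩
noncomputable def z : Model J := ⟨0, 0, 1⟩

theorem z_ne_one : (z : Model J) ≠ 1 := fun h => one_ne_zero (congrArg central h)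

open Classical in
theorem mk_eps_coe (n : ℕ+) : (⟨0, 0, eps J n⟩ : Model J) = if n ∈ J then 1 else z := by
  rw [eps_coe]
  split_ifs <;> rfl

theorem commute_z (x : Model J) : Commute z x := by
  refine Model.ext ?_ (add_comm _ _) ?_
  · change 0 + T 0 * x.lamps = x.lamps + T x.shift * 0
    rw [T_zero, one_mul, zero_add, mul_zero, add_zero]
  · change 1 + x.central + cocycle J 0 (T 0 * x.lamps)
      = x.central + 1 + cocycle J x.lamps (T x.shift * 0)
    rw [mul_zero, map_zero, map_zero, LinearMap.zero_apply, add_comm (1 : ZMod 2)]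

theorem eq_one_or_eq_z_of_commute {x : Model J} (ht : Commute x t) (ha : Commute x a) :
    x = 1 ∨ x = z := by
  have hlamps : x.lamps = 0 := by
    refine eq_zero_of_T_mul_eq_self one_ne_zero ?_
    simpa [t] using (congrArg lamps ht.eq).symm
  have hshift : x.shift = 0 := by
    refine T_injective (R := ZMod 2) ?_
    simpa [a, hlamps] using congrArg lamps ha.eq
  obtain ⟨f, m, u⟩ := x
  subst hlamps hshift
  fin_cases u
  exacts [Or.inl rfl, Or.inr rfl]

def lampsIn (K : Ideal Lamps) : Subgroup (Model J) where
  carrier := {x | x.shift = 0 ∧ x.lamps ∈ K}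
  one_mem' := ⟨rfl, K.zero_mem⟩
  mul_mem' := by
    rintro x y ⟨hx, hxK⟩ ⟨hy, hyK⟩
    exact ⟨by simp [hx, hy], K.add_mem hxK (K.mul_mem_left _ hyK)⟩
  inv_mem' := by
    rintro x ⟨hx, hxK⟩
    exact ⟨by simp [hx], K.mul_mem_left _ hxK⟩

instance (K : Ideal Lamps) : (lampsIn K : Subgroup (Model J)).Normal where
  conj_mem x := by
    rintro ⟨hx, hxK⟩ σ
    exact ⟨conj_shift hx, conj_lamps hx ▸ K.mul_mem_left _ hxK⟩

theorem isUnit_shift_of_t_mem_sup {K : Ideal Lamps} {y : Model J}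
    (ht : t ∈ lampsIn K ⊔ Subgroup.zpowers y) : IsUnit y.shift := by
  obtain ⟨x, ⟨hx, -⟩, _, ⟨k, rfl⟩, hxy⟩ := Subgroup.mem_sup_of_normal_left.mp ht
  have hk := congrArg shift hxy
  simp only [mul_shift, zpow_shift, hx, zero_add, t] at hk
  exact IsUnit.of_mul_eq_one_right k hk

theorem eq_top_of_a_mem_sup {K : Ideal Lamps} {y : Model J} (hy : y.shift ≠ 0)
    (ha : a ∈ lampsIn K ⊔ Subgroup.zpowers y) : K = ⊤ := by
  obtain ⟨x, ⟨hx, hxK⟩, _, ⟨k, rfl⟩, hxy⟩ := Subgroup.mem_sup_of_normal_left.mp ha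
  have hk := congrArg shift hxy
  simp only [mul_shift, zpow_shift, hx, zero_add, a, mul_eq_zero, hy, or_false] at hk
  simp only [hk, zpow_zero, mul_one] at hxy
  subst hxy
  exact K.eq_top_of_isUnit_mem hxK isUnit_one

open Classical in
theorem commutatorElement_conj_pow {x τ : Model J} {k : ℤ} (hx : x.shift = 0) (hk : x.lamps = T k)
    (hτ : IsUnit τ.shift) (n : ℕ+) :
    ⁅τ ^ (n : ℕ) * x * (τ ^ (n : ℕ))⁻¹, x⁆ = if n ∈ J then 1 else z := by
  rw [commutatorElement_of_shift_eq_zero (conj_shift hx) hx, conj_lamps hx, hk, ← T_add,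
    cocycle_T_T_add_cocycle_T_T, add_sub_cancel_right, pow_shift,
    eps_of_abs_eq (d' := n) (by rw [abs_mul, Int.isUnit_iff_abs_eq.mp hτ, mul_one]), mk_eps_coe]

theorem a_mul_self : (a : Model J) * a = 1 := by
  have h := cocycle_T_T J 0 0
  rw [T_zero, if_neg (lt_irrefl 0)] at h
  ext1 <;> simp [a, h, CharTwo.add_self_eq_zero]

theorem z_mul_self : (z : Model J) * z = 1 := by
  ext1 <;> simp [z, CharTwo.add_self_eq_zero]

theorem lift_eq_one_of_mem_rels {r : FreeGroup (Fin 3)} (hr : r ∈ rels J) :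
    FreeGroup.lift (![a, t, z] : Fin 3 → Model J) r = 1 := by
  have ha : FreeGroup.lift ![a, t, z] Stmt6.a = (a : Model J) := FreeGroup.lift_apply_of
  have ht : FreeGroup.lift ![a, t, z] Stmt6.t = (t : Model J) := FreeGroup.lift_apply_of
  have hz : FreeGroup.lift ![a, t, z] Stmt6.z = (z : Model J) := FreeGroup.lift_apply_of
  have hrel (n : ℕ+) := commutatorElement_conj_pow (J := J) (τ := t) (x := a) rfl T_zero.symm
    isUnit_one n
  rcases hr with (hr | ⟨n, hn, rfl⟩) | ⟨n, hn, rfl⟩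
  · simp only [Set.mem_insert_iff, Set.mem_singleton_iff] at hr
    rcases hr with rfl | rfl | rfl | rfl
    · rw [map_pow, ha, sq, a_mul_self]
    · rw [map_pow, hz, sq, z_mul_self]
    · rw [map_commutatorElement, ha, hz, commutatorElement_eq_one_iff_mul_comm, commute_z]
    · rw [map_commutatorElement, ht, hz, commutatorElement_eq_one_iff_mul_comm, commute_z]
  · simp only [map_commutatorElement, map_mul, map_inv, map_pow, ha, ht, hrel, if_pos hn]
  · simp only [map_mul, map_inv, map_commutatorElement, map_pow, ha, ht, hz, hrel, if_neg hn,
      mul_inv_cancel]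

end Model

noncomputable def toModel (J : Set ℕ+) : G J →* Model J :=
  PresentedGroup.toGroup fun _ => Model.lift_eq_one_of_mem_rels

theorem toModel_mk_a (J : Set ℕ+) : toModel J (G.mk J a) = Model.a :=
  PresentedGroup.toGroup.of _

theorem toModel_mk_t (J : Set ℕ+) : toModel J (G.mk J t) = Model.t :=
  PresentedGroup.toGroup.of _

open Classical in
theorem eq_or_eq_univ_of_commutatorElement {I J : Set ℕ+} {x τ c : Model J} {k : ℤ}
    (hx : x.shift = 0) (hk : x.lamps = T k) (hτ : IsUnit τ.shift) (hc : c = 1 ∨ c = Model.z)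
    (hrel : ∀ n : ℕ+, ⁅τ ^ (n : ℕ) * x * (τ ^ (n : ℕ))⁻¹, x⁆ = if n ∈ I then 1 else c) :
    I = J ∨ J = Set.univ := by
  simp only [Model.commutatorElement_conj_pow hx hk hτ] at hrel
  rcases hc with rfl | rfl
  · refine Or.inr (Set.eq_univ_of_forall fun n => ?_)
    by_contra hn
    simpa [hn, Model.z_ne_one] using hrel n
  · refine Or.inl (Set.ext fun n => ?_)
    simpa [Model.z_ne_one] using congrArg (· = 1) (hrel n).symm

theorem eq_or_eq_univ_of_range {I J : Set ℕ+} (ρ : G I →* Model J) (ha : Model.a ∈ ρ.range)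
    (ht : Model.t ∈ ρ.range) (hz : ρ (G.mk I z) = 1 ∨ ρ (G.mk I z) = Model.z) :
    I = J ∨ J = Set.univ := by
  have hA : (ρ (G.mk I a)).shift = 0 := by
    have := congrArg Model.shift (congrArg ρ (G.mk_a_mul_self (I := I)))
    simp only [map_mul, map_one, Model.mul_shift, Model.one_shift] at this
    omega
  have hle : ρ.range ≤
      Model.lampsIn (Ideal.span {(ρ (G.mk I a)).lamps}) ⊔ Subgroup.zpowers (ρ (G.mk I t)) := by
    refine G.range_le ρ (Subgroup.mem_sup_left ⟨hA, Ideal.mem_span_singleton_self _⟩)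
      (Subgroup.mem_sup_right (Subgroup.mem_zpowers _)) (Subgroup.mem_sup_left ?_)
    rcases hz with hz | hz <;> rw [hz]
    exacts [⟨rfl, Ideal.zero_mem _⟩, ⟨rfl, Ideal.zero_mem _⟩]
  have hτ := Model.isUnit_shift_of_t_mem_sup (hle ht)
  obtain ⟨r, k, hr, hk⟩ := exists_C_mul_T_of_isUnit <| Ideal.span_singleton_eq_top.mp <|
    Model.eq_top_of_a_mem_sup hτ.ne_zero (hle ha)
  obtain rfl : r = 1 := by
    fin_cases r
    exacts [absurd hr not_isUnit_zero, rfl]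
  rw [map_one, one_mul] at hk
  refine eq_or_eq_univ_of_commutatorElement hA hk hτ hz fun n => ?_
  simpa [apply_ite ρ] using congrArg ρ (G.mk_commutatorElement (I := I) n)

theorem eq_or_eq_univ_of_mulEquiv {I J : Set ℕ+} (ψ : G I ≃* G J) : I = J ∨ J = Set.univ := by
  let ρ := (toModel J).comp ψ.toMonoidHom
  have hρ (y : G J) : ρ (ψ.symm y) = toModel J y := by simp [ρ]
  refine eq_or_eq_univ_of_range ρ ⟨_, (hρ _).trans (toModel_mk_a J)⟩
    ⟨_, (hρ _).trans (toModel_mk_t J)⟩ (Model.eq_one_or_eq_z_of_commute ?_ ?_)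
  · simpa [hρ, toModel_mk_t] using (G.commute_mk_z (ψ.symm (G.mk J t))).map ρ
  · simpa [hρ, toModel_mk_a] using (G.commute_mk_z (ψ.symm (G.mk J a))).map ρ

/-- the groups `G_I` and `G_J` are isomorphic if and only if `I = J`. -/
theorem G_iso_iff_eq (I J : Set ℕ+) : Nonempty (G I ≃* G J) ↔ I = J := by
  refine ⟨fun ⟨ψ⟩ => ?_, fun h => h ▸ ⟨MulEquiv.refl _⟩⟩
  rcases eq_or_eq_univ_of_mulEquiv ψ, eq_or_eq_univ_of_mulEquiv ψ.symm with ⟨h | hJ, h' | hI⟩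
  exacts [h, h, h'.symm, hI.trans hJ.symm]

end Stmt6
end

section
/- Let G be a group containing a finite-index subgroup H that admits a proper action on a median graph. Then G admits a proper action on a median graph. -/
/-!
Induction from a finite-index subgroup. Choosing coset representatives, `G` acts on the
functions `G ⧸ H → V` by `(g • f) c = ρ (h(g, c)) (f (g⁻¹ • c))`, where `h(g, c) ∈ H` is the
cocycle measuring how `g` moves the representatives. This is an action by automorphisms of the
product of `[G : H]` copies of `X` (two functions are adjacent when they differ in exactly one
coordinate, by an edge of `X`). Distances in this product are sums of coordinate distances, so
medians are computed coordinatewise and the product is again a median graph. A stabilizer of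
the induced action is finite because `g` is determined by `g⁻¹ • H` and `h(g, H)`, and the
latter ranges over finitely many finite transporter sets of `ρ`.
-/

namespace Stmt8

def IsMedianGraph {V : Type*} (X : SimpleGraph V) : Prop :=
  X.Connected ∧ ∀ x y z : V, ∃! m : V,
    X.dist x m + X.dist m y = X.dist x y ∧
    X.dist y m + X.dist m z = X.dist y z ∧
    X.dist x m + X.dist m z = X.dist x z

open SimpleGraph

section PiBoxProd

variable {ι : Type*} {V : ι → Type*} (X : ∀ i, SimpleGraph (V i))

def piBoxProd : SimpleGraph (∀ i, V i) where
  Adj f g := ∃ i, (X i).Adj (f i) (g i) ∧ ∀ j ≠ i, f j = g j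
  symm := ⟨fun _ _ ⟨i, hadj, heq⟩ => ⟨i, hadj.symm, fun j hj => (heq j hj).symm⟩⟩
  loopless := ⟨fun _ ⟨_, hadj, _⟩ => hadj.ne rfl⟩

variable {X}

def piBoxProdUpdateHom [DecidableEq ι] (b : ∀ i, V i) (i : ι) : X i →g piBoxProd X where
  toFun := Function.update b i
  map_rel' {u v} h := ⟨i, by simpa using h, fun j hj => by simp [Function.update_of_ne hj]⟩

theorem piBoxProd_exists_walk_length_eq_sum_of_eqOn [DecidableEq ι] (hX : ∀ i, (X i).Connected)
    (s : Finset ι) {f g : ∀ i, V i} (hfg : ∀ i ∉ s, f i = g i) :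
    ∃ p : (piBoxProd X).Walk f g, p.length = ∑ i ∈ s, (X i).dist (f i) (g i) := by
  induction s using Finset.induction generalizing g with
  | empty =>
    obtain rfl : f = g := funext fun i => hfg i (Finset.notMem_empty i)
    exact ⟨Walk.nil, by simp⟩
  | @insert a s ha ih =>
    set g' := Function.update g a (f a)
    have hg' : ∀ i ∈ s, g' i = g i := fun i hi =>
      Function.update_of_ne (by rintro rfl; exact ha hi) _ _
    obtain ⟨p, hp⟩ := ih (g := g') fun i hi => by
      by_cases hia : i = a
      · subst hia; simp [g']
      · rw [show g' i = g i from Function.update_of_ne hia _ _]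
        exact hfg i (by simp [hia, hi])
    obtain ⟨q, hq⟩ := (hX a).exists_walk_length_eq_dist (f a) (g a)
    let r : (piBoxProd X).Walk g' g :=
      (q.map (piBoxProdUpdateHom g a)).copy rfl (Function.update_eq_self a g)
    have hr : r.length = q.length := (Walk.length_copy _ _ _).trans (Walk.length_map _ _)
    refine ⟨p.append r, ?_⟩
    rw [Walk.length_append, hr, hp, hq, Finset.sum_insert ha,
      Finset.sum_congr rfl fun i hi => by rw [hg' i hi], add_comm]

theorem piBoxProd_exists_walk_length_eq_sum [Fintype ι] (hX : ∀ i, (X i).Connected)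
    (f g : ∀ i, V i) :
    ∃ p : (piBoxProd X).Walk f g, p.length = ∑ i, (X i).dist (f i) (g i) := by
  classical
  exact piBoxProd_exists_walk_length_eq_sum_of_eqOn hX Finset.univ fun i hi =>
    absurd (Finset.mem_univ i) hi

theorem piBoxProd_sum_dist_le_of_adj [Fintype ι] {f f' : ∀ i, V i}
    (h : (piBoxProd X).Adj f f') (g : ∀ i, V i) :
    ∑ i, (X i).dist (f i) (g i) ≤ ∑ i, (X i).dist (f' i) (g i) + 1 := by
  classical
  obtain ⟨a, hadj, heq⟩ := h
  rw [← Finset.add_sum_erase _ _ (Finset.mem_univ a),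
    ← Finset.add_sum_erase _ _ (Finset.mem_univ a),
    Finset.sum_congr rfl fun i hi => by rw [heq i (Finset.ne_of_mem_erase hi)]]
  have hstep : (X a).dist (f a) (g a) ≤ 1 + (X a).dist (f' a) (g a) :=
    dist_eq_one_iff_adj.2 hadj ▸ hadj.reachable.dist_triangle_left (g a)
  omega

theorem piBoxProd_sum_dist_le_length [Fintype ι] {f g : ∀ i, V i}
    (p : (piBoxProd X).Walk f g) : ∑ i, (X i).dist (f i) (g i) ≤ p.length := by
  induction p with
  | nil => simp
  | cons h p ih =>
    rw [Walk.length_cons]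
    exact (piBoxProd_sum_dist_le_of_adj h _).trans (by omega)

theorem piBoxProd_dist [Fintype ι] (hX : ∀ i, (X i).Connected) (f g : ∀ i, V i) :
    (piBoxProd X).dist f g = ∑ i, (X i).dist (f i) (g i) := by
  obtain ⟨p, hp⟩ := piBoxProd_exists_walk_length_eq_sum hX f g
  obtain ⟨q, hq⟩ := p.reachable.exists_walk_length_eq_dist
  exact le_antisymm (hp ▸ dist_le p) (hq ▸ piBoxProd_sum_dist_le_length q)

theorem piBoxProd_connected [Fintype ι] (hX : ∀ i, (X i).Connected) :
    (piBoxProd X).Connected := by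
  have : Nonempty (∀ i, V i) := ⟨fun i => (hX i).nonempty.some⟩
  exact ⟨fun f g => (piBoxProd_exists_walk_length_eq_sum hX f g).elim fun p _ => p.reachable⟩

theorem piBoxProd_dist_add_dist_eq_iff [Fintype ι] (hX : ∀ i, (X i).Connected)
    (f m g : ∀ i, V i) :
    (piBoxProd X).dist f m + (piBoxProd X).dist m g = (piBoxProd X).dist f g ↔
      ∀ i, (X i).dist (f i) (m i) + (X i).dist (m i) (g i) = (X i).dist (f i) (g i) := by
  rw [piBoxProd_dist hX, piBoxProd_dist hX, piBoxProd_dist hX, ← Finset.sum_add_distrib, eq_comm,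
    Finset.sum_eq_sum_iff_of_le fun i _ => (hX i).dist_triangle]
  simp only [Finset.mem_univ, forall_const]
  exact forall_congr' fun _ => eq_comm

theorem existsUnique_pi {ι : Type*} {α : ι → Type*} {P : ∀ i, α i → Prop}
    (h : ∀ i, ∃! a, P i a) : ∃! f : ∀ i, α i, ∀ i, P i (f i) :=
  ⟨fun i => (h i).choose, fun i => (h i).choose_spec.1,
    fun _ hf => funext fun i => (h i).unique (hf i) (h i).choose_spec.1⟩

theorem isMedianGraph_piBoxProd [Finite ι] (hX : ∀ i, IsMedianGraph (X i)) :
    IsMedianGraph (piBoxProd X) := by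
  cases nonempty_fintype ι
  have hconn i := (hX i).1
  refine ⟨piBoxProd_connected hconn, fun x y z => ?_⟩
  simp only [piBoxProd_dist_add_dist_eq_iff hconn, ← forall_and]
  exact existsUnique_pi fun i => (hX i).2 (x i) (y i) (z i)

end PiBoxProd

theorem finite_setOf_apply_eq {H V : Type*} [Group H] (ρ : H →* Equiv.Perm V)
    (hproper : ∀ v, {h : H | ρ h v = v}.Finite) (u v : V) : {h : H | ρ h u = v}.Finite := by
  rcases Set.eq_empty_or_nonempty {h : H | ρ h u = v} with he | ⟨h₀, hh₀⟩
  · simp [he]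
  refine ((hproper u).preimage (mul_right_injective h₀⁻¹).injOn).subset
    fun h (hh : ρ h u = v) => ?_
  change ρ (h₀⁻¹ * h) u = u
  rw [map_mul, Equiv.Perm.mul_apply, hh, ← (hh₀ : ρ h₀ u = v)]
  simp

theorem adj_iff_of_forall_adj {G W : Type*} [Group G] {Y : SimpleGraph W}
    {σ : G →* Equiv.Perm W} (hσ : ∀ g u w, Y.Adj u w → Y.Adj (σ g u) (σ g w))
    (g : G) (u w : W) : Y.Adj (σ g u) (σ g w) ↔ Y.Adj u w :=
  ⟨fun h => by simpa using hσ g⁻¹ _ _ h, hσ g u w⟩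

section Induced

variable {G : Type*} [Group G] (H : Subgroup G)

noncomputable def inducedCocycle (g : G) (c : G ⧸ H) : H :=
  ⟨c.out⁻¹ * g * (g⁻¹ • c).out, by
    rw [mul_assoc]
    exact QuotientGroup.eq.mp (by
      rw [QuotientGroup.out_eq', ← smul_eq_mul, MulAction.Quotient.mk_smul_out, smul_inv_smul])⟩

theorem coe_inducedCocycle (g : G) (c : G ⧸ H) :
    (inducedCocycle H g c : G) = c.out⁻¹ * g * (g⁻¹ • c).out := rfl

theorem inducedCocycle_one (c : G ⧸ H) : inducedCocycle H 1 c = 1 :=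
  Subtype.ext (by simp [coe_inducedCocycle])

theorem inducedCocycle_mul (a b : G) (c : G ⧸ H) :
    inducedCocycle H (a * b) c = inducedCocycle H a c * inducedCocycle H b (a⁻¹ • c) := by
  apply Subtype.ext
  push_cast [coe_inducedCocycle, mul_inv_rev, mul_smul]
  group

variable {H} {V : Type*} (ρ : H →* Equiv.Perm V)

noncomputable def inducedActionFun (g : G) (f : G ⧸ H → V) : G ⧸ H → V :=
  fun c => ρ (inducedCocycle H g c) (f (g⁻¹ • c))

theorem inducedActionFun_one (f : G ⧸ H → V) : inducedActionFun ρ 1 f = f := by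
  funext c
  simp [inducedActionFun, inducedCocycle_one]

theorem inducedActionFun_mul (a b : G) (f : G ⧸ H → V) :
    inducedActionFun ρ (a * b) f = inducedActionFun ρ a (inducedActionFun ρ b f) := by
  funext c
  simp only [inducedActionFun, inducedCocycle_mul, map_mul, Equiv.Perm.mul_apply, mul_inv_rev,
    mul_smul]

noncomputable def inducedAction : G →* Equiv.Perm (G ⧸ H → V) :=
  MonoidHom.mk'
    (fun g =>
      { toFun := inducedActionFun ρ g
        invFun := inducedActionFun ρ g⁻¹
        left_inv := fun f => by rw [← inducedActionFun_mul, inv_mul_cancel, inducedActionFun_one]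
        right_inv := fun f => by
          rw [← inducedActionFun_mul, mul_inv_cancel, inducedActionFun_one] })
    fun a b => Equiv.ext (inducedActionFun_mul ρ a b)

theorem inducedAction_apply (g : G) (f : G ⧸ H → V) (c : G ⧸ H) :
    inducedAction ρ g f c = ρ (inducedCocycle H g c) (f (g⁻¹ • c)) := rfl

theorem inducedAction_adj {X : SimpleGraph V}
    (hρ : ∀ (h : H) (u v : V), X.Adj u v → X.Adj (ρ h u) (ρ h v))
    (g : G) {f f' : G ⧸ H → V} (hf : (piBoxProd fun _ => X).Adj f f') :
    (piBoxProd fun _ => X).Adj (inducedAction ρ g f) (inducedAction ρ g f') := by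
  obtain ⟨c, hadj, heq⟩ := hf
  refine ⟨g • c, ?_, fun c' hc' => ?_⟩
  · rw [inducedAction_apply, inducedAction_apply, inv_smul_smul]
    exact hρ _ _ _ hadj
  · rw [inducedAction_apply, inducedAction_apply, heq _ (by rintro rfl; simp at hc')]

theorem finite_setOf_inducedAction_eq [Finite (G ⧸ H)]
    (hproper : ∀ v, {h : H | ρ h v = v}.Finite) (f : G ⧸ H → V) :
    {g : G | inducedAction ρ g f = f}.Finite := by
  set c₀ : G ⧸ H := ((1 : G) : G ⧸ H)
  let Φ : G → (G ⧸ H) × H := fun g => (g⁻¹ • c₀, inducedCocycle H g c₀)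
  have hΦ : Function.Injective Φ := fun g g' hgg' => by
    simp only [Φ, Prod.mk.injEq, Subtype.ext_iff, coe_inducedCocycle] at hgg'
    rw [hgg'.1] at hgg'
    simpa using hgg'.2
  have hS : {p : (G ⧸ H) × H | ρ p.2 (f p.1) = f c₀}.Finite :=
    (Set.finite_univ.prod (Set.finite_iUnion fun c =>
      finite_setOf_apply_eq ρ hproper (f c) (f c₀))).subset
      fun p hp => ⟨Set.mem_univ _, Set.mem_iUnion.2 ⟨p.1, hp⟩⟩
  refine (hS.preimage hΦ.injOn).subset fun g (hg : inducedAction ρ g f = f) => ?_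
  simpa [inducedAction_apply, Φ] using congrFun hg c₀

end Induced

/-- if a group `G` has a finite-index subgroup `H` acting properly on a median
graph, then `G` itself acts properly on some median graph. -/
theorem proper_action_on_median_graph_of_finite_index_subgroup
    {G : Type u} [Group G] {V : Type v} (H : Subgroup G) (hH : H.FiniteIndex)
    (X : SimpleGraph V) (hX : IsMedianGraph X)
    (ρ : H →* Equiv.Perm V)
    (hact : ∀ (h : H) (u v : V), X.Adj (ρ h u) (ρ h v) ↔ X.Adj u v)
    (hproper : ∀ v : V, {h : H | ρ h v = v}.Finite) :
    ∃ (W : Type (max u v)) (Y : SimpleGraph W) (σ : G →* Equiv.Perm W),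
      IsMedianGraph Y ∧
      (∀ (g : G) (u w : W), Y.Adj (σ g u) (σ g w) ↔ Y.Adj u w) ∧
      ∀ w : W, {g : G | σ g w = w}.Finite := by
  have : Finite (G ⧸ H) := H.finite_quotient_of_finiteIndex
  exact ⟨G ⧸ H → V, piBoxProd fun _ => X, inducedAction ρ,
    isMedianGraph_piBoxProd fun _ => hX,
    adj_iff_of_forall_adj fun g _ _ => inducedAction_adj ρ (fun h u v => (hact h u v).2) g,
    finite_setOf_inducedAction_eq ρ hproper⟩

end Stmt8
end

section
/- Let X be a metric space that is loxodromically indicable, let G be a group acting on X by isometries, and let A ≤ G be a central, finitely generated subgroup such that every non-trivial element of A acts on X as a loxodromic isometry. Then A is a direct factor of a finite-index subgroup of G. -/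
namespace Stmt10

open Pointwise

/-- An isometry `g` of a metric space `X` is loxodromic if for every `x ∈ X` the orbit map
`n ↦ gⁿ • x` is a quasi-isometric embedding of `ℤ` into `X`. -/
def IsLoxodromic {X : Type*} [MetricSpace X] (g : X ≃ᵢ X) : Prop :=
  ∀ x : X, ∃ L C : ℝ, 1 ≤ L ∧ 0 ≤ C ∧ ∀ m n : ℤ,
    ((|m - n| : ℤ) : ℝ) / L - C ≤ dist ((g ^ m) x) ((g ^ n) x) ∧
    dist ((g ^ m) x) ((g ^ n) x) ≤ L * ((|m - n| : ℤ) : ℝ) + C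

theorem self_mem_centralizer {G : Type*} [Group G] (g : G) :
    g ∈ Subgroup.centralizer {g} :=
  Subgroup.mem_centralizer_iff.mpr (by rintro h rfl; rfl)

/-- A metric space `X` is loxodromically indicable if for every loxodromic isometry `g` of
`X` there is a homomorphism `φ` from the centralizer of `g` in `Isom(X)` to `ℤ` with
`φ(g) ≠ 0`. -/
def LoxodromicallyIndicable (X : Type*) [MetricSpace X] : Prop :=
  ∀ g : X ≃ᵢ X, IsLoxodromic g →
    ∃ φ : Subgroup.centralizer ({g} : Set (X ≃ᵢ X)) →* Multiplicative ℤ,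
      φ ⟨g, self_mem_centralizer g⟩ ≠ 1

/-- `A` is a direct factor of a finite-index subgroup of `G`: there are a finite-index
subgroup `K ≤ G` containing `A` and a subgroup `B ≤ K` such that `A` and `B` are normal
in `K`, `A ∩ B = {1}` and `A·B = K`. -/
def IsDirectFactorOfFiniteIndexSubgroup {G : Type*} [Group G] (A : Subgroup G) : Prop :=
  ∃ K B : Subgroup G, K.FiniteIndex ∧ A ≤ K ∧ B ≤ K ∧
    (∀ k ∈ K, ∀ a ∈ A, k * a * k⁻¹ ∈ A) ∧
    (∀ k ∈ K, ∀ b ∈ B, k * b * k⁻¹ ∈ B) ∧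
    A ⊓ B = ⊥ ∧ (A : Set G) * (B : Set G) = (K : Set G)


/-! Every non-trivial `a ∈ A` acts loxodromically, and `G` acts through the centralizer of
`ρ a`, so loxodromic indicability yields a homomorphism `G → ℤ` not killing `a`. Restricted to
the finitely generated abelian group `A`, these homomorphisms separate points, so `A` is free
abelian and its dual contains the lattice `M` of restrictions. Lifting a basis of `M` to
homomorphisms `G → ℤ` gives `ψ : G → ℤʳ`, `r = rank M`, which is injective on `A`; hence
`rank ψ(A) = rank A ≥ rank M = r`, and `ψ(A)` has finite index in `ℤʳ`. Then `A` and `ker ψ`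
are complementary normal subgroups of the finite-index subgroup `ψ⁻¹(ψ(A)) = A ⊔ ker ψ`. -/

section LinearAlgebra

variable {V W : Type*} [AddCommGroup V] [AddCommGroup W]

theorem isTorsionFree_of_separatesPoints (res : W →ₗ[ℤ] Module.Dual ℤ V)
    (hsep : ∀ v : V, v ≠ 0 → ∃ w, res w v ≠ 0) : Module.IsTorsionFree ℤ V := by
  refine Function.Injective.moduleIsTorsionFree res.flip ?_ (map_smul _)
  refine (injective_iff_map_eq_zero _).mpr fun v hv ↦ ?_
  by_contra hv0
  obtain ⟨w, hw⟩ := hsep v hv0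
  exact hw (LinearMap.congr_fun hv w)

theorem exists_injective_pi_finiteIndex_range [Module.Finite ℤ V]
    (res : W →ₗ[ℤ] Module.Dual ℤ V) (hsep : ∀ v : V, v ≠ 0 → ∃ w, res w v ≠ 0) :
    ∃ (r : ℕ) (w : Fin r → W), Function.Injective (LinearMap.pi fun i ↦ res (w i)) ∧
      (LinearMap.range (LinearMap.pi fun i ↦ res (w i))).toAddSubgroup.FiniteIndex := by
  have := isTorsionFree_of_separatesPoints res hsep
  set M := LinearMap.range res
  let b := Module.finBasis ℤ M
  choose w hw using fun i ↦ LinearMap.mem_range.mp (b i).2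
  set Φ := LinearMap.pi fun i ↦ res (w i)
  have hinj : Function.Injective Φ := by
    rw [← LinearMap.ker_eq_bot, Submodule.eq_bot_iff]
    intro v hv
    by_contra hv0
    obtain ⟨w', hw'⟩ := hsep v hv0
    have : (Module.Dual.eval ℤ V v).comp M.subtype = 0 := b.ext fun i ↦ by
      simpa [Φ, hw] using congrFun hv i
    exact hw' (by simpa using LinearMap.congr_fun this ⟨res w', w', rfl⟩)
  refine ⟨_, w, hinj, ?_⟩
  have : Finite ((Fin (Module.finrank ℤ M) → ℤ) ⧸ LinearMap.range Φ) := by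
    apply Submodule.finiteQuotientOfFreeOfRankEq
    apply le_antisymm (Submodule.finrank_le _)
    -- `rank M ≤ rank V* = rank V = rank Φ(V)`
    rw [LinearMap.finrank_range_of_inj hinj, Module.finrank_fin_fun,
      ← Module.finrank_linearMap_self ℤ ℤ V]
    exact Submodule.finrank_le M
  exact AddSubgroup.finiteIndex_iff_finite_quotient.mpr this

end LinearAlgebra

section Group

variable {G : Type*} [Group G]

theorem isDirectFactorOfFiniteIndexSubgroup_of_inf_ker_eq_bot {H : Type*} [Group H]
    {A : Subgroup G} (hA : A ≤ Subgroup.center G) (ψ : G →* H) (hker : A ⊓ ψ.ker = ⊥)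
    (hindex : (A.map ψ).FiniteIndex) : IsDirectFactorOfFiniteIndexSubgroup A := by
  refine ⟨(A.map ψ).comap ψ, ψ.ker, ⟨?_⟩, Subgroup.le_comap_map ψ A, ψ.ker_le_comap _,
    fun k _ a ha ↦ ?_, fun k _ b hb ↦ (ψ.normal_ker).conj_mem b hb k, hker, ?_⟩
  · rw [Subgroup.index_comap]
    exact Subgroup.isFiniteRelIndex_iff_relIndex_ne_zero.mp
      Subgroup.isFiniteRelIndex_of_finiteIndex
  · rwa [Subgroup.mem_center_iff.mp (hA ha) k, mul_inv_cancel_right]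
  · rw [Subgroup.comap_map_eq, Subgroup.mul_normal]

open scoped IsMulCommutative in
def restrictDual (A : Subgroup G) [IsMulCommutative A] :
    Additive (G →* Multiplicative ℤ) →ₗ[ℤ] Module.Dual ℤ (Additive A) :=
  AddMonoidHom.toIntLinearMap
    { toFun f := (MonoidHom.toAdditiveLeft ((Additive.toMul f).comp A.subtype)).toIntLinearMap
      map_zero' := rfl
      map_add' _ _ := rfl }

open scoped IsMulCommutative in
@[simp]
theorem restrictDual_apply (A : Subgroup G) [IsMulCommutative A] (f : G →* Multiplicative ℤ)
    (a : Additive A) : restrictDual A (Additive.ofMul f) a = (f (Additive.toMul a : A)).toAdd :=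
  rfl

open scoped IsMulCommutative in
theorem exists_monoidHom_inf_ker_eq_bot_finiteIndex (A : Subgroup G) [IsMulCommutative A]
    (hfg : A.FG) (hsep : ∀ a ∈ A, a ≠ 1 → ∃ f : G →* Multiplicative ℤ, f a ≠ 1) :
    ∃ (r : ℕ) (ψ : G →* Multiplicative (Fin r → ℤ)), A ⊓ ψ.ker = ⊥ ∧ (A.map ψ).FiniteIndex := by
  have : Group.FG A := (Group.fg_iff_subgroup_fg A).mpr hfg
  have : Module.Finite ℤ (Additive A) := Module.Finite.iff_addGroup_fg.mpr inferInstance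
  obtain ⟨r, w, hinj, hindex⟩ := exists_injective_pi_finiteIndex_range (restrictDual A)
    fun v hv ↦ (hsep _ (Additive.toMul v).2 fun h ↦ hv (Subtype.ext h)).elim fun f hf ↦
      ⟨Additive.ofMul f, by simpa using hf⟩
  let ψ := (MulEquiv.piMultiplicative _).symm.toMonoidHom.comp
    (MonoidHom.pi fun i ↦ Additive.toMul (w i))
  set Φ := LinearMap.pi fun i ↦ restrictDual A (w i)
  have hψ (a : A) : ψ a = Multiplicative.ofAdd (Φ (Additive.ofMul a)) := rfl
  refine ⟨r, ψ, eq_bot_iff.mpr ?_, ?_⟩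
  · rintro x ⟨hxA, hx⟩
    have hΦ : Φ (Additive.ofMul ⟨x, hxA⟩) = 0 :=
      congrArg Multiplicative.toAdd ((hψ _).symm.trans hx)
    exact congrArg Subtype.val ((injective_iff_map_eq_zero Φ).mp hinj _ hΦ)
  · have : A.map ψ = AddSubgroup.toSubgroup (LinearMap.range Φ).toAddSubgroup := by
      ext x
      constructor
      · rintro ⟨a, ha, rfl⟩
        exact ⟨Additive.ofMul ⟨a, ha⟩, rfl⟩
      · rintro ⟨v, hv⟩
        exact ⟨_, (Additive.toMul v).2, congrArg Multiplicative.ofAdd hv⟩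
    rwa [this, AddSubgroup.finiteIndex_toSubgroup_iff]

end Group

theorem LoxodromicallyIndicable.exists_monoidHom_ne_one {X : Type*} [MetricSpace X]
    (hX : LoxodromicallyIndicable X) {G : Type*} [Group G] (ρ : G →* (X ≃ᵢ X)) {a : G}
    (ha : a ∈ Subgroup.center G) (hlox : IsLoxodromic (ρ a)) :
    ∃ f : G →* Multiplicative ℤ, f a ≠ 1 := by
  obtain ⟨φ, hφ⟩ := hX (ρ a) hlox
  have hcomm (g : G) : ρ g ∈ Subgroup.centralizer {ρ a} := by
    rw [Subgroup.mem_centralizer_singleton_iff, ← map_mul, ← map_mul,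
      Subgroup.mem_center_iff.mp ha g]
  exact ⟨φ.comp (ρ.codRestrict _ hcomm), hφ⟩

/-- if a group `G` acts by isometries on a loxodromically indicable metric
space `X` and `A ≤ G` is a central finitely generated subgroup all of whose non-trivial
elements act as loxodromic isometries, then `A` is a direct factor of a finite-index
subgroup of `G`. -/
theorem central_loxodromic_subgroup_virtually_direct_factor
    {X : Type*} [MetricSpace X] (hX : LoxodromicallyIndicable X)
    {G : Type*} [Group G] (ρ : G →* (X ≃ᵢ X))
    (A : Subgroup G) (hcentral : A ≤ Subgroup.center G) (hfg : A.FG)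
    (hlox : ∀ a ∈ A, a ≠ 1 → IsLoxodromic (ρ a)) :
    IsDirectFactorOfFiniteIndexSubgroup A := by
  have : IsMulCommutative A := Subgroup.le_centralizer_iff_isMulCommutative.mp
    (hcentral.trans (Subgroup.center_le_centralizer (A : Set G)))
  obtain ⟨r, ψ, hker, hindex⟩ := exists_monoidHom_inf_ker_eq_bot_finiteIndex A hfg
    fun a ha ha1 ↦ hX.exists_monoidHom_ne_one ρ (hcentral ha) (hlox a ha ha1)
  exact isDirectFactorOfFiniteIndexSubgroup_of_inf_ker_eq_bot hcentral ψ hker hindex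

end Stmt10
end
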